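/- arXiv:2010.11296 — 2 statements merged into one kernel-verified Lean document; each statement's English description precedes it below -/
import Mathlib

section
/- For the forward kinematics map (φ,θ,D) ↦ (x,y,z) with x = d3·cos(θ)·cos(φ) + D, y = d3·sin(φ) + d2, z = -d3·sin(θ)·cos(φ) + d1, the map is injective on the domain φ, θ ∈ (-π/2, π/2), D ∈ ℝ, for d3 > 0. -/
open Real

theorem Real.injOn_sin_Ioo : Set.InjOn sin (Set.Ioo (-(π / 2)) (π / 2)) :=
  injOn_sin.mono Set.Ioo_subset_Icc_self

theorem stmt_1 (d1 d2 d3 : ℝ) (hd3 : 0 < d3) :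
    Set.InjOn (fun p : ℝ × ℝ × ℝ =>
      (d3 * Real.cos p.2.1 * Real.cos p.1 + p.2.2,
       d3 * Real.sin p.1 + d2,
       -d3 * Real.sin p.2.1 * Real.cos p.1 + d1))
      {p : ℝ × ℝ × ℝ | p.1 ∈ Set.Ioo (-(π/2)) (π/2) ∧ p.2.1 ∈ Set.Ioo (-(π/2)) (π/2)} := by
  rintro ⟨φ₁, θ₁, D₁⟩ ⟨hφ₁, hθ₁⟩ ⟨φ₂, θ₂, D₂⟩ ⟨hφ₂, hθ₂⟩ h
  obtain ⟨hx, hy, hz⟩ : _ ∧ _ ∧ _ := by simpa only [Prod.mk.injEq] using h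
  obtain rfl : φ₁ = φ₂ :=
    injOn_sin_Ioo hφ₁ hφ₂ (mul_left_cancel₀ hd3.ne' (add_right_cancel hy))
  have hcos : cos φ₁ ≠ 0 := (cos_pos_of_mem_Ioo hφ₁).ne'
  obtain rfl : θ₁ = θ₂ := injOn_sin_Ioo hθ₁ hθ₂ <|
    mul_left_cancel₀ (neg_ne_zero.2 hd3.ne') (mul_right_cancel₀ hcos (add_right_cancel hz))
  obtain rfl : D₁ = D₂ := add_left_cancel hx
  rfl
end

section
/- Under the velocity control law ω_φ = (−k1·e_y + y_r')/(d3·cos(φ)) and ω_θ = (k2·e_z + d3·sin(θ)·sin(φ)·ω_φ − z_r')/(d3·cos(θ)·cos(φ)), the tracking errors satisfy e_y' = −k1·e_y and e_z' = −k2·e_z. -/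
/-!
Feedback linearization: each tracking error has derivative `g * ω + h - r'`, where `ω` is the
control and the gain `g` (a product of `d3` and cosines of angles in `(-π/2, π/2)`) never
vanishes. The control law is `ω = (-k * e - h + r') / g`, so the gain cancels and `e' = -k * e`.
-/

open Real

section Kinematics

variable {φ θ : ℝ → ℝ} {ωφ ωθ t : ℝ}

theorem hasDerivAt_mul_sin_add (hφ : HasDerivAt φ ωφ t) (a b : ℝ) :
    HasDerivAt (fun s => a * sin (φ s) + b) (a * cos (φ t) * ωφ) t := by
  simpa only [mul_assoc] using (hφ.sin.const_mul a).add_const b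

theorem hasDerivAt_neg_mul_sin_mul_cos_add (hθ : HasDerivAt θ ωθ t) (hφ : HasDerivAt φ ωφ t)
    (a b : ℝ) :
    HasDerivAt (fun s => -a * sin (θ s) * cos (φ s) + b)
      (-a * cos (θ t) * cos (φ t) * ωθ + a * sin (θ t) * sin (φ t) * ωφ) t := by
  exact (((hθ.sin.const_mul (-a)).fun_mul hφ.cos).add_const b).congr_deriv (by ring)

end Kinematics

theorem cos_ne_zero_of_mem_Ioo {x : ℝ} (hx : x ∈ Set.Ioo (-(π / 2)) (π / 2)) : cos x ≠ 0 :=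
  (cos_pos_of_mem_Ioo hx).ne'

theorem stmt_7_general (d1 d2 d3 k1 k2 : ℝ) (hd3 : 0 < d3)
    (φ θ ωφ ωθ yr zr yr' zr' : ℝ → ℝ)
    (hrange : ∀ t, φ t ∈ Set.Ioo (-(π/2)) (π/2) ∧ θ t ∈ Set.Ioo (-(π/2)) (π/2))
    (hφ : ∀ t, HasDerivAt φ (ωφ t) t) (hθ : ∀ t, HasDerivAt θ (ωθ t) t)
    (hyr : ∀ t, HasDerivAt yr (yr' t) t) (hzr : ∀ t, HasDerivAt zr (zr' t) t)
    (y z ey ez : ℝ → ℝ)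
    (hy : ∀ t, y t = d3 * Real.sin (φ t) + d2)
    (hz : ∀ t, z t = -d3 * Real.sin (θ t) * Real.cos (φ t) + d1)
    (hey : ∀ t, ey t = y t - yr t) (hez : ∀ t, ez t = z t - zr t)
    (hωφ : ∀ t, ωφ t = (-k1 * ey t + yr' t) / (d3 * Real.cos (φ t)))
    (hωθ : ∀ t, ωθ t = (k2 * ez t + d3 * Real.sin (θ t) * Real.sin (φ t) * ωφ t - zr' t)
        / (d3 * Real.cos (θ t) * Real.cos (φ t))) :
    (∀ t, HasDerivAt ey (-k1 * ey t) t) ∧ (∀ t, HasDerivAt ez (-k2 * ez t) t) := by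
  refine ⟨fun t => ?_, fun t => ?_⟩
  all_goals
    have hcφ := cos_ne_zero_of_mem_Ioo (hrange t).1
    have hcθ := cos_ne_zero_of_mem_Ioo (hrange t).2
  · have hey' : HasDerivAt ey (d3 * cos (φ t) * ωφ t - yr' t) t := by
      rw [funext hey, funext hy]
      exact (hasDerivAt_mul_sin_add (hφ t) d3 d2).sub (hyr t)
    have hgain : d3 * cos (φ t) * ωφ t = -k1 * ey t + yr' t := by
      rw [hωφ t]; field_simp
    exact hey'.congr_deriv (by rw [hgain]; ring)
  · have hez' : HasDerivAt ez (-d3 * cos (θ t) * cos (φ t) * ωθ t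
        + d3 * sin (θ t) * sin (φ t) * ωφ t - zr' t) t := by
      rw [funext hez, funext hz]
      exact (hasDerivAt_neg_mul_sin_mul_cos_add (hθ t) (hφ t) d3 d1).sub (hzr t)
    have hgain : d3 * cos (θ t) * cos (φ t) * ωθ t
        = k2 * ez t + d3 * sin (θ t) * sin (φ t) * ωφ t - zr' t := by
      rw [hωθ t]; field_simp
    exact hez'.congr_deriv (by linear_combination -hgain)

theorem stmt_7 (d1 d2 d3 k1 k2 : ℝ) (hd3 : 0 < d3) (hk1 : 0 < k1) (hk2 : 0 < k2)
    (φ θ ωφ ωθ yr zr yr' zr' : ℝ → ℝ)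
    (hrange : ∀ t, φ t ∈ Set.Ioo (-(π/2)) (π/2) ∧ θ t ∈ Set.Ioo (-(π/2)) (π/2))
    (hφ : ∀ t, HasDerivAt φ (ωφ t) t) (hθ : ∀ t, HasDerivAt θ (ωθ t) t)
    (hyr : ∀ t, HasDerivAt yr (yr' t) t) (hzr : ∀ t, HasDerivAt zr (zr' t) t)
    (y z ey ez : ℝ → ℝ)
    (hy : ∀ t, y t = d3 * Real.sin (φ t) + d2)
    (hz : ∀ t, z t = -d3 * Real.sin (θ t) * Real.cos (φ t) + d1)
    (hey : ∀ t, ey t = y t - yr t) (hez : ∀ t, ez t = z t - zr t)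
    (hωφ : ∀ t, ωφ t = (-k1 * ey t + yr' t) / (d3 * Real.cos (φ t)))
    (hωθ : ∀ t, ωθ t = (k2 * ez t + d3 * Real.sin (θ t) * Real.sin (φ t) * ωφ t - zr' t)
        / (d3 * Real.cos (θ t) * Real.cos (φ t))) :
    (∀ t, HasDerivAt ey (-k1 * ey t) t) ∧ (∀ t, HasDerivAt ez (-k2 * ez t) t) :=
  stmt_7_general d1 d2 d3 k1 k2 hd3 φ θ ωφ ωθ yr zr yr' zr' hrange hφ hθ hyr hzr y z ey ez hy hz hey
    hez hωφ hωθ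
end
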